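/- Let ν > 0 and let f = h + conj(g) be a locally univalent harmonic mapping on 𝔻 (i.e. J_f(z) ≠ 0 for all z ∈ 𝔻). If β*_ν(f) < ∞, then β_{ν+1/2}(f) < ∞; that is, every locally univalent harmonic ν-Bloch-type mapping is a harmonic (ν+1/2)-Bloch mapping. -/

import Mathlib

/-!
Since `J_f = ‖h'‖² - ‖g'‖²` does not vanish on the connected disc, it has constant sign; say
`‖g'‖ < ‖h'‖`. Then `ω = g' / h'` is a holomorphic self-map of the disc, and the Schwarz lemma
applied to `ω` followed by the disc automorphism moving `ω 0` to `0` gives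
`1 - ‖ω z‖² ≥ c (1 - ‖z‖²)` with `c = (1 - ‖ω 0‖²) / 4`. Hence `J_f ≥ c (1 - ‖z‖²) ‖h'‖²`, so
`(1 - ‖z‖²)^(1/2) (‖h'‖ + ‖g'‖) ≤ 2 c^(-1/2) √J_f`, and it remains to multiply by `(1 - ‖z‖²)^ν`.
-/

open Complex Metric

open ComplexConjugate Set

noncomputable def discMobius (a w : ℂ) : ℂ := (a - w) / (1 - conj a * w)

section discMobius

variable {a w : ℂ}

lemma one_sub_conj_mul_ne_zero (ha : ‖a‖ < 1) (hw : ‖w‖ ≤ 1) : 1 - conj a * w ≠ 0 := by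
  intro h
  have hlt : ‖conj a * w‖ < 1 := by
    rw [norm_mul, norm_conj]
    exact (mul_le_of_le_one_right (norm_nonneg a) hw).trans_lt ha
  rw [← sub_eq_zero.1 h, norm_one] at hlt
  exact hlt.false

lemma normSq_one_sub_conj_mul_sub_normSq_sub (a w : ℂ) :
    normSq (1 - conj a * w) - normSq (a - w) = (1 - normSq a) * (1 - normSq w) := by
  simp only [normSq_apply, mul_re, mul_im, sub_re, sub_im, one_re, one_im, conj_re, conj_im]
  ring

lemma one_sub_sq_norm_discMobius (ha : ‖a‖ < 1) (hw : ‖w‖ ≤ 1) :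
    1 - ‖discMobius a w‖ ^ 2 = (1 - ‖a‖ ^ 2) * (1 - ‖w‖ ^ 2) / ‖1 - conj a * w‖ ^ 2 := by
  have hden : normSq (1 - conj a * w) ≠ 0 := normSq_eq_zero.not.2 (one_sub_conj_mul_ne_zero ha hw)
  rw [discMobius, norm_div, div_pow]
  simp only [Complex.sq_norm]
  rw [eq_div_iff hden, sub_mul, div_mul_cancel₀ _ hden]
  linarith [normSq_one_sub_conj_mul_sub_normSq_sub a w]

lemma one_sub_sq_norm_discMobius_ge (ha : ‖a‖ < 1) (hw : ‖w‖ < 1) :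
    (1 - ‖a‖ ^ 2) * (1 - ‖w‖ ^ 2) / 4 ≤ 1 - ‖discMobius a w‖ ^ 2 := by
  have hden := one_sub_conj_mul_ne_zero ha hw.le
  have hden_le : ‖1 - conj a * w‖ ≤ 2 := by
    calc ‖1 - conj a * w‖ ≤ 1 + ‖a‖ * ‖w‖ := by
          simpa [norm_mul, norm_conj] using norm_sub_le (1 : ℂ) (conj a * w)
      _ ≤ 2 := by nlinarith [norm_nonneg a, norm_nonneg w]
  have hnum : 0 ≤ (1 - ‖a‖ ^ 2) * (1 - ‖w‖ ^ 2) := by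
    have := norm_nonneg a; have := norm_nonneg w
    apply mul_nonneg <;> nlinarith
  rw [one_sub_sq_norm_discMobius ha hw.le]
  gcongr
  nlinarith [norm_nonneg (1 - conj a * w)]

lemma norm_discMobius_lt_one (ha : ‖a‖ < 1) (hw : ‖w‖ < 1) : ‖discMobius a w‖ < 1 := by
  have hpos : 0 < (1 - ‖a‖ ^ 2) * (1 - ‖w‖ ^ 2) / 4 := by
    have := norm_nonneg a; have := norm_nonneg w
    apply div_pos (mul_pos _ _) four_pos <;> nlinarith
  have := one_sub_sq_norm_discMobius_ge ha hw
  nlinarith [norm_nonneg (discMobius a w)]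

lemma discMobius_discMobius (ha : ‖a‖ < 1) (hw : ‖w‖ ≤ 1) :
    discMobius a (discMobius a w) = w := by
  have h₁ := one_sub_conj_mul_ne_zero ha hw
  have h₂ := one_sub_conj_mul_ne_zero ha ha.le
  have hden : 1 - conj a * discMobius a w = (1 - conj a * a) / (1 - conj a * w) := by
    rw [discMobius, eq_div_iff h₁, sub_mul, mul_assoc, div_mul_cancel₀ _ h₁]; ring
  have hnum : a - discMobius a w = w * (1 - conj a * a) / (1 - conj a * w) := by
    rw [discMobius, eq_div_iff h₁, sub_mul, div_mul_cancel₀ _ h₁]; ring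
  rw [discMobius, hnum, hden, div_div_div_cancel_right₀ h₁, mul_div_cancel_right₀ _ h₂]

lemma differentiableOn_discMobius (ha : ‖a‖ < 1) :
    DifferentiableOn ℂ (discMobius a) (ball 0 1) :=
  ((differentiableOn_const a).sub differentiableOn_id).div
    ((differentiableOn_const 1).sub ((differentiableOn_const _).mul differentiableOn_id))
    fun _ hw => one_sub_conj_mul_ne_zero ha (mem_ball_zero_iff.1 hw).le

end discMobius

theorem mul_one_sub_sq_norm_le_of_mapsTo_ball {ω : ℂ → ℂ} (hd : DifferentiableOn ℂ ω (ball 0 1))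
    (hmaps : MapsTo ω (ball 0 1) (ball 0 1)) {z : ℂ} (hz : z ∈ ball 0 1) :
    (1 - ‖ω 0‖ ^ 2) * (1 - ‖z‖ ^ 2) ≤ 4 * (1 - ‖ω z‖ ^ 2) := by
  set a := ω 0
  have ha : ‖a‖ < 1 := mem_ball_zero_iff.1 (hmaps (mem_ball_self one_pos))
  set F := discMobius a ∘ ω
  have hFmaps : MapsTo F (ball 0 1) (ball 0 1) := fun w hw =>
    mem_ball_zero_iff.2 (norm_discMobius_lt_one ha (mem_ball_zero_iff.1 (hmaps hw)))
  have hF0 : F 0 = 0 := by simp [F, a, discMobius]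
  have hFz : ‖F z‖ ≤ ‖z‖ :=
    norm_le_norm_of_mapsTo_ball ((differentiableOn_discMobius ha).comp hd hmaps)
      (hFmaps.mono_right ball_subset_closedBall) hF0 (mem_ball_zero_iff.1 hz)
  have hωz : discMobius a (F z) = ω z :=
    discMobius_discMobius ha (mem_ball_zero_iff.1 (hmaps hz)).le
  have hFz_lt : ‖F z‖ < 1 := mem_ball_zero_iff.1 (hFmaps hz)
  calc (1 - ‖a‖ ^ 2) * (1 - ‖z‖ ^ 2) ≤ (1 - ‖a‖ ^ 2) * (1 - ‖F z‖ ^ 2) := by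
        gcongr
        nlinarith [norm_nonneg a]
    _ ≤ 4 * (1 - ‖ω z‖ ^ 2) := by
        linarith [hωz ▸ one_sub_sq_norm_discMobius_ge ha hFz_lt]

lemma mul_sq_norm_le_sq_norm_sub_sq_norm {H G : ℂ → ℂ} (hH : DifferentiableOn ℂ H (ball 0 1))
    (hG : DifferentiableOn ℂ G (ball 0 1)) (hlt : ∀ z ∈ ball (0 : ℂ) 1, ‖G z‖ < ‖H z‖)
    {z : ℂ} (hz : z ∈ ball 0 1) :
    (1 - ‖G 0 / H 0‖ ^ 2) / 4 * (1 - ‖z‖ ^ 2) * ‖H z‖ ^ 2 ≤ ‖H z‖ ^ 2 - ‖G z‖ ^ 2 := by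
  have hH0 : ∀ z ∈ ball (0 : ℂ) 1, 0 < ‖H z‖ := fun z hz => (norm_nonneg _).trans_lt (hlt z hz)
  have hmaps : MapsTo (fun z => G z / H z) (ball 0 1) (ball 0 1) := fun w hw => by
    rw [mem_ball_zero_iff, norm_div, div_lt_one (hH0 w hw)]
    exact hlt w hw
  have key := mul_one_sub_sq_norm_le_of_mapsTo_ball
    (hG.div hH fun w hw => norm_pos_iff.1 (hH0 w hw)) hmaps hz
  have hJ : ‖H z‖ ^ 2 - ‖G z‖ ^ 2 = ‖H z‖ ^ 2 * (1 - ‖G z / H z‖ ^ 2) := by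
    rw [norm_div, div_pow]
    field_simp [(hH0 z hz).ne']
  simp only [Pi.div_apply] at key
  rw [hJ]
  nlinarith [mul_le_mul_of_nonneg_left key (sq_nonneg ‖H z‖)]

lemma rpow_add_half_mul_add_le {t x y c ν : ℝ} (ht : 0 < t) (hc : 0 < c) (hy : 0 ≤ y)
    (hyx : y ≤ x) (hJ : c * t * x ^ 2 ≤ x ^ 2 - y ^ 2) :
    t ^ (ν + 1 / 2) * (x + y) ≤ 2 / √c * (t ^ ν * √(x ^ 2 - y ^ 2)) := by
  have hx : 0 ≤ x := hy.trans hyx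
  have hsqrt : √t * x ≤ √(x ^ 2 - y ^ 2) / √c := by
    rw [le_div_iff₀ (Real.sqrt_pos.2 hc), ← Real.sqrt_sq hx, ← Real.sqrt_mul ht.le,
      ← Real.sqrt_mul (by positivity), Real.sqrt_sq hx]
    exact Real.sqrt_le_sqrt (by linarith)
  have htν : 0 ≤ t ^ ν := Real.rpow_nonneg ht.le ν
  calc t ^ (ν + 1 / 2) * (x + y) ≤ t ^ (ν + 1 / 2) * (2 * x) := by gcongr; linarith
    _ = 2 * (t ^ ν * (√t * x)) := by rw [Real.rpow_add ht, ← Real.sqrt_eq_rpow]; ring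
    _ ≤ 2 * (t ^ ν * (√(x ^ 2 - y ^ 2) / √c)) := by gcongr
    _ = 2 / √c * (t ^ ν * √(x ^ 2 - y ^ 2)) := by ring

theorem exists_bound_rpow_add_half_of_norm_lt {ν M : ℝ} {H G : ℂ → ℂ}
    (hH : DifferentiableOn ℂ H (ball 0 1)) (hG : DifferentiableOn ℂ G (ball 0 1))
    (hlt : ∀ z ∈ ball (0 : ℂ) 1, ‖G z‖ < ‖H z‖)
    (hM : ∀ z ∈ ball (0 : ℂ) 1, (1 - ‖z‖ ^ 2) ^ ν * √|‖H z‖ ^ 2 - ‖G z‖ ^ 2| ≤ M) :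
    ∃ M' : ℝ, ∀ z ∈ ball (0 : ℂ) 1, (1 - ‖z‖ ^ 2) ^ (ν + 1 / 2) * (‖H z‖ + ‖G z‖) ≤ M' := by
  set c := (1 - ‖G 0 / H 0‖ ^ 2) / 4
  have hc : 0 < c := by
    have h0 : (0 : ℂ) ∈ ball (0 : ℂ) 1 := mem_ball_self one_pos
    have : ‖G 0 / H 0‖ < 1 := by
      rw [norm_div, div_lt_one ((norm_nonneg _).trans_lt (hlt 0 h0))]
      exact hlt 0 h0
    have := norm_nonneg (G 0 / H 0)
    simp only [c]; nlinarith
  refine ⟨2 / √c * M, fun z hz => ?_⟩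
  have hz1 : ‖z‖ < 1 := mem_ball_zero_iff.1 hz
  have hJ : 0 ≤ ‖H z‖ ^ 2 - ‖G z‖ ^ 2 := by
    have := hlt z hz; have := norm_nonneg (G z); nlinarith
  calc (1 - ‖z‖ ^ 2) ^ (ν + 1 / 2) * (‖H z‖ + ‖G z‖)
      ≤ 2 / √c * ((1 - ‖z‖ ^ 2) ^ ν * √(‖H z‖ ^ 2 - ‖G z‖ ^ 2)) :=
        rpow_add_half_mul_add_le (by nlinarith [norm_nonneg z]) hc (norm_nonneg _) (hlt z hz).le
          (mul_sq_norm_le_sq_norm_sub_sq_norm hH hG hlt hz)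
    _ ≤ 2 / √c * M := by
        gcongr
        simpa only [abs_of_nonneg hJ] using hM z hz

theorem locally_univalent_Bloch_type_is_Bloch_general
    (ν : ℝ) (h g : ℂ → ℂ)
    (hh : DifferentiableOn ℂ h (ball 0 1))
    (hg : DifferentiableOn ℂ g (ball 0 1))
    (hlu : ∀ z ∈ ball (0 : ℂ) 1,
      ‖deriv h z‖ ^ 2 - ‖deriv g z‖ ^ 2 ≠ 0)
    (hf : ∃ M : ℝ, ∀ z ∈ ball (0 : ℂ) 1,
      (1 - ‖z‖ ^ 2) ^ ν *
        Real.sqrt |‖deriv h z‖ ^ 2 - ‖deriv g z‖ ^ 2| ≤ M) :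
    ∃ M : ℝ, ∀ z ∈ ball (0 : ℂ) 1,
      (1 - ‖z‖ ^ 2) ^ (ν + 1 / 2) *
        (‖deriv h z‖ + ‖deriv g z‖) ≤ M := by
  obtain ⟨M, hM⟩ := hf
  have hh' : DifferentiableOn ℂ (deriv h) (ball 0 1) :=
    (hh.analyticOnNhd isOpen_ball).deriv.differentiableOn
  have hg' : DifferentiableOn ℂ (deriv g) (ball 0 1) :=
    (hg.analyticOnNhd isOpen_ball).deriv.differentiableOn
  have hJ : ContinuousOn (fun z => ‖deriv h z‖ ^ 2 - ‖deriv g z‖ ^ 2) (ball 0 1) :=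
    (hh'.continuousOn.norm.pow 2).sub (hg'.continuousOn.norm.pow 2)
  have lt_of_sq_lt {x y : ℂ} (hxy : 0 < ‖x‖ ^ 2 - ‖y‖ ^ 2) : ‖y‖ < ‖x‖ :=
    (pow_lt_pow_iff_left₀ (norm_nonneg _) (norm_nonneg _) two_ne_zero).1 (sub_pos.1 hxy)
  rcases (convex_ball (0 : ℂ) 1).isPreconnected.mapsTo_Ioi_or_Iio hJ hlu with hpos | hneg
  · exact exists_bound_rpow_add_half_of_norm_lt hh' hg' (fun z hz => lt_of_sq_lt (hpos hz)) hM
  · obtain ⟨M', hM'⟩ := exists_bound_rpow_add_half_of_norm_lt hg' hh'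
      (fun z hz => lt_of_sq_lt (by linarith [mem_Iio.1 (hneg hz)]))
      (fun z hz => abs_sub_comm (‖deriv h z‖ ^ 2) (‖deriv g z‖ ^ 2) ▸ hM z hz)
    exact ⟨M', fun z hz => add_comm ‖deriv g z‖ ‖deriv h z‖ ▸ hM' z hz⟩

/-- Every locally univalent harmonic ν-Bloch-type mapping on `𝔻` is a harmonic
(ν + 1/2)-Bloch mapping: if `J_f ≠ 0` on `𝔻` and `β*_ν(f) < ∞`, then `β_{ν+1/2}(f) < ∞`. -/
theorem locally_univalent_Bloch_type_is_Bloch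
    (ν : ℝ) (hν : 0 < ν) (h g : ℂ → ℂ)
    (hh : DifferentiableOn ℂ h (ball 0 1))
    (hg : DifferentiableOn ℂ g (ball 0 1))
    (hg0 : g 0 = 0)
    (hlu : ∀ z ∈ ball (0 : ℂ) 1,
      ‖deriv h z‖ ^ 2 - ‖deriv g z‖ ^ 2 ≠ 0)
    (hf : ∃ M : ℝ, ∀ z ∈ ball (0 : ℂ) 1,
      (1 - ‖z‖ ^ 2) ^ ν *
        Real.sqrt |‖deriv h z‖ ^ 2 - ‖deriv g z‖ ^ 2| ≤ M) :
    ∃ M : ℝ, ∀ z ∈ ball (0 : ℂ) 1,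
      (1 - ‖z‖ ^ 2) ^ (ν + 1 / 2) *
        (‖deriv h z‖ + ‖deriv g z‖) ≤ M :=
  locally_univalent_Bloch_type_is_Bloch_general ν h g hh hg hlu hf
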